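/- If the singular values of Z follow an exact power law σ_k = C k^{−α} for k = 1, …, m with α ≥ 0 and C > 0, then RankMe(Z) depends only on α and m, is equal to m when α = 0, and is strictly decreasing in α; in particular as α → ∞, RankMe(Z) → 1. -/

import Mathlib

open Matrix BigOperators Real Filter

theorem Matrix.isHermitian_transpose_mul_self {m n : Type*} [Fintype m]
    (A : Matrix m n ℝ) : (Aᵀ * A).IsHermitian := by
  simpa using Matrix.isHermitian_conjTranspose_mul_self A

/-- Singular values of a real `N × C` matrix, in decreasing order
(indexed by `Fin C`; trailing entries are `0` when `N < C`). -/
noncomputable def singularValues {N C : ℕ} (Y : Matrix (Fin N) (Fin C) ℝ) : Fin C → ℝ :=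
  fun i =>
    Real.sqrt ((((Matrix.isHermitian_transpose_mul_self Y).eigenvalues) ∘
      Tuple.sort ((Matrix.isHermitian_transpose_mul_self Y).eigenvalues)) i.rev)

/-- Squared Frobenius norm. -/
noncomputable def frobSq {N C : ℕ} (A : Matrix (Fin N) (Fin C) ℝ) : ℝ :=
  ∑ i, ∑ j, (A i j) ^ 2

/-- The RankMe effective rank: exponential of the Shannon entropy of the
normalized singular value distribution (with the convention `0 * log 0 = 0`). -/
noncomputable def rankMe {N C : ℕ} (Z : Matrix (Fin N) (Fin C) ℝ) : ℝ :=
  Real.exp (∑ k, Real.negMulLog (singularValues Z k / ∑ j, singularValues Z j))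

/-- The `N × C` matrix `𝟙 bᵀ` whose every row is `bᵀ`. -/
def onesOuter (N : ℕ) {C : ℕ} (b : Fin C → ℝ) : Matrix (Fin N) (Fin C) ℝ :=
  Matrix.of fun _ j => b j

/-- Effective rank of an exact power-law spectrum `σ_k = C k^{-α}` on `m` atoms. -/
noncomputable def powerLawRankMe (m : ℕ) (α : ℝ) : ℝ :=
  Real.exp (∑ k : Fin m,
    Real.negMulLog ((((k : ℕ) + 1 : ℝ) ^ (-α)) / ∑ j : Fin m, (((j : ℕ) + 1 : ℝ) ^ (-α))))

/-!
A power-law spectrum `σ_k ∝ (k+1)^(-α)` is the Gibbs distribution `p_k ∝ exp (-α c_k)` of the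
energies `c_k = log (k+1)`, and RankMe is the exponential of its entropy
`H(α) = α ⟨c⟩_α + log Z(α)`. Differentiating gives `H'(α) = -α Var_α(c)`, which is negative for
`α > 0` because the energies are not all equal. As `α → ∞` the distribution concentrates on the
unique ground state `c_0 = 0`, so `H → 0` and RankMe tends to `1`.
-/

section Gibbs

variable {ι : Type*} [Fintype ι] (c : ι → ℝ)

/-- `gibbsMoment c 0` is the partition function `Z(α)`. -/
noncomputable def gibbsMoment (n : ℕ) (α : ℝ) : ℝ :=
  ∑ i, c i ^ n * exp (-α * c i)

noncomputable def gibbsEntropy (α : ℝ) : ℝ :=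
  ∑ i, negMulLog (exp (-α * c i) / gibbsMoment c 0 α)

lemma gibbsMoment_zero_pos [Nonempty ι] (α : ℝ) : 0 < gibbsMoment c 0 α := by
  unfold gibbsMoment
  exact Finset.sum_pos (fun i _ => by positivity) Finset.univ_nonempty

lemma hasDerivAt_gibbsMoment (n : ℕ) (α : ℝ) :
    HasDerivAt (gibbsMoment c n) (-gibbsMoment c (n + 1) α) α := by
  have hterm (i : ι) : HasDerivAt (fun a => c i ^ n * exp (-a * c i))
      (-(c i ^ (n + 1) * exp (-α * c i))) α :=
    (((hasDerivAt_neg α).mul_const (c i)).exp.const_mul (c i ^ n)).congr_deriv (by ring)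
  unfold gibbsMoment
  simpa only [Finset.sum_neg_distrib] using HasDerivAt.fun_sum fun i _ => hterm i

lemma gibbsEntropy_eq [Nonempty ι] (α : ℝ) :
    gibbsEntropy c α = α * gibbsMoment c 1 α / gibbsMoment c 0 α + log (gibbsMoment c 0 α) := by
  have hZ := gibbsMoment_zero_pos c α
  have hterm (i : ι) : negMulLog (exp (-α * c i) / gibbsMoment c 0 α)
      = α * (c i ^ 1 * exp (-α * c i)) / gibbsMoment c 0 α
        + c i ^ 0 * exp (-α * c i) / gibbsMoment c 0 α * log (gibbsMoment c 0 α) := by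
    rw [negMulLog, log_div (exp_pos _).ne' hZ.ne', log_exp]
    ring
  rw [gibbsEntropy, Finset.sum_congr rfl fun i _ => hterm i, Finset.sum_add_distrib,
    ← Finset.sum_div, ← Finset.mul_sum, ← Finset.sum_mul, ← Finset.sum_div]
  change α * gibbsMoment c 1 α / _ + gibbsMoment c 0 α / _ * _ = _
  rw [div_self hZ.ne', one_mul]

lemma hasDerivAt_gibbsEntropy [Nonempty ι] (α : ℝ) :
    HasDerivAt (gibbsEntropy c)
      (-(α * (gibbsMoment c 2 α * gibbsMoment c 0 α - gibbsMoment c 1 α ^ 2)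
        / gibbsMoment c 0 α ^ 2)) α := by
  have hZ := gibbsMoment_zero_pos c α
  rw [show gibbsEntropy c = _ from funext (gibbsEntropy_eq c)]
  refine ((((hasDerivAt_id α).mul (hasDerivAt_gibbsMoment c 1 α)).div
    (hasDerivAt_gibbsMoment c 0 α) hZ.ne').add
    ((hasDerivAt_gibbsMoment c 0 α).log hZ.ne')).congr_deriv ?_
  simp only [Pi.mul_apply, id]
  field_simp
  ring

/-- Lagrange's identity for the weighted variance of the energies. -/
lemma two_mul_gibbsMoment_variance (α : ℝ) :
    2 * (gibbsMoment c 2 α * gibbsMoment c 0 α - gibbsMoment c 1 α ^ 2)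
      = ∑ i, ∑ j, (c i - c j) ^ 2 * (exp (-α * c i) * exp (-α * c j)) := by
  set w := fun i => exp (-α * c i)
  have hswap : ∑ i, ∑ j, c j ^ 2 * (w j * w i) = ∑ i, ∑ j, c i ^ 2 * (w i * w j) :=
    Finset.sum_comm
  have hexpand : ∑ i, ∑ j, (c i - c j) ^ 2 * (w i * w j) = ∑ i, ∑ j, c i ^ 2 * (w i * w j)
      + ∑ i, ∑ j, c j ^ 2 * (w j * w i) - 2 * ∑ i, ∑ j, c i * w i * (c j * w j) := by
    simp only [Finset.mul_sum, ← Finset.sum_add_distrib, ← Finset.sum_sub_distrib]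
    exact Finset.sum_congr rfl fun i _ => Finset.sum_congr rfl fun j _ => by ring
  simp only [gibbsMoment, sq (∑ i, _), Finset.sum_mul_sum, pow_zero, pow_one, one_mul]
  rw [hexpand, hswap]
  simp only [w, mul_assoc]
  ring

lemma gibbsMoment_one_sq_lt {i j : ι} (hij : c i ≠ c j) (α : ℝ) :
    gibbsMoment c 1 α ^ 2 < gibbsMoment c 2 α * gibbsMoment c 0 α := by
  have hnonneg (k l : ι) : 0 ≤ (c k - c l) ^ 2 * (exp (-α * c k) * exp (-α * c l)) := by
    positivity
  have hpos : 0 < (c i - c j) ^ 2 * (exp (-α * c i) * exp (-α * c j)) := by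
    have := sub_ne_zero.mpr hij
    positivity
  have hsum : 0 < ∑ k, ∑ l, (c k - c l) ^ 2 * (exp (-α * c k) * exp (-α * c l)) :=
    Finset.sum_pos' (fun k _ => Finset.sum_nonneg fun l _ => hnonneg k l)
      ⟨i, Finset.mem_univ _, Finset.sum_pos' (fun l _ => hnonneg i l) ⟨j, Finset.mem_univ _, hpos⟩⟩
  linarith [two_mul_gibbsMoment_variance c α]

lemma strictAntiOn_gibbsEntropy {i j : ι} (hij : c i ≠ c j) :
    StrictAntiOn (gibbsEntropy c) (Set.Ici 0) := by
  have : Nonempty ι := ⟨i⟩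
  refine strictAntiOn_of_deriv_neg (convex_Ici 0)
    (fun α _ => (hasDerivAt_gibbsEntropy c α).continuousAt.continuousWithinAt) fun α hα => ?_
  rw [interior_Ici, Set.mem_Ioi] at hα
  have := gibbsMoment_one_sq_lt c hij α
  have := gibbsMoment_zero_pos c α
  rw [(hasDerivAt_gibbsEntropy c α).deriv, neg_lt_zero]
  exact div_pos (mul_pos hα (by linarith)) (by positivity)

lemma gibbsEntropy_zero [Nonempty ι] : gibbsEntropy c 0 = log (Fintype.card ι) := by
  simp only [gibbsEntropy, gibbsMoment, neg_zero, zero_mul, exp_zero, pow_zero,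
    Finset.sum_const, Finset.card_univ, nsmul_eq_mul, mul_one, negMulLog, one_div, log_inv]
  field_simp

lemma tendsto_gibbsEntropy_atTop {i₀ : ι} (hc : ∀ i, i ≠ i₀ → 0 < c i) (hc₀ : c i₀ = 0) :
    Tendsto (gibbsEntropy c) atTop (nhds 0) := by
  classical
  have hw (i : ι) :
      Tendsto (fun α => exp (-α * c i)) atTop (nhds (if i = i₀ then 1 else 0)) := by
    split_ifs with h
    · simp [h, hc₀]
    · refine (tendsto_exp_neg_atTop_nhds_zero.comp
        (tendsto_id.atTop_mul_const (hc i h))).congr fun α => ?_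
      simp [neg_mul]
  have hZ : Tendsto (gibbsMoment c 0) atTop (nhds 1) := by
    have := tendsto_finsetSum Finset.univ fun i _ => hw i
    simp only [Finset.sum_ite_eq', Finset.mem_univ, if_true] at this
    unfold gibbsMoment
    simpa only [pow_zero, one_mul] using this
  have := tendsto_finsetSum Finset.univ fun i _ =>
    (continuous_negMulLog.tendsto _).comp ((hw i).div hZ one_ne_zero)
  unfold gibbsEntropy
  simpa [apply_ite negMulLog] using this

end Gibbs

lemma rankMe_eq_of_singularValues_eq_const_mul {N K : ℕ} {Z : Matrix (Fin N) (Fin K) ℝ}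
    {a : ℝ} (ha : a ≠ 0) {x : Fin K → ℝ} (hZ : ∀ k, singularValues Z k = a * x k) :
    rankMe Z = exp (∑ k, negMulLog (x k / ∑ j, x j)) := by
  simp only [rankMe, hZ, ← Finset.mul_sum, mul_div_mul_left _ _ ha]

lemma powerLawRankMe_eq_exp_gibbsEntropy (m : ℕ) (α : ℝ) :
    powerLawRankMe m α = exp (gibbsEntropy (fun k : Fin m => log ((k : ℕ) + 1)) α) := by
  have hrpow (k : ℕ) : ((k : ℝ) + 1) ^ (-α) = exp (-α * log ((k : ℕ) + 1)) := by
    rw [rpow_def_of_pos (by positivity), mul_comm]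
  simp only [powerLawRankMe, gibbsEntropy, gibbsMoment, pow_zero, one_mul, hrpow]

theorem rankMe_power_law_general {N K : ℕ} (Z : Matrix (Fin N) (Fin K) ℝ) (α Cc : ℝ)
    (hC : 0 < Cc) (hK : 0 < K)
    (hσ : ∀ k : Fin K, singularValues Z k = Cc * (((k : ℕ) + 1 : ℝ) ^ (-α))) :
    rankMe Z = powerLawRankMe K α ∧
    powerLawRankMe K 0 = (K : ℝ) ∧
    (2 ≤ K → StrictAntiOn (powerLawRankMe K) (Set.Ici (0 : ℝ))) ∧
    Filter.Tendsto (powerLawRankMe K) Filter.atTop (nhds 1) := by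
  have : Nonempty (Fin K) := Fin.pos_iff_nonempty.mp hK
  set c : Fin K → ℝ := fun k => log ((k : ℕ) + 1)
  have hc₀ : c ⟨0, hK⟩ = 0 := by simp [c]
  have hc (k : Fin K) (hk : k ≠ ⟨0, hK⟩) : 0 < c k := by
    have : (k : ℕ) ≠ 0 := fun h => hk (Fin.ext h)
    exact log_pos (by norm_cast; omega)
  have hpowerLaw : powerLawRankMe K = exp ∘ gibbsEntropy c :=
    funext (powerLawRankMe_eq_exp_gibbsEntropy K)
  refine ⟨rankMe_eq_of_singularValues_eq_const_mul hC.ne' hσ, ?_, fun hK₂ => ?_, ?_⟩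
  all_goals rw [hpowerLaw]
  · rw [Function.comp_apply, gibbsEntropy_zero, Fintype.card_fin, exp_log (by exact_mod_cast hK)]
  · have hc₀₁ : c ⟨0, hK⟩ ≠ c ⟨1, hK₂⟩ := hc₀ ▸ (hc ⟨1, hK₂⟩ (by simp)).ne
    exact exp_strictMono.comp_strictAntiOn (strictAntiOn_gibbsEntropy c hc₀₁)
  · simpa using (continuous_exp.tendsto 0).comp (tendsto_gibbsEntropy_atTop c hc hc₀)

/-- If the singular values of `Z` follow an exact power law `σ_k = C k^{-α}`, then
`RankMe(Z)` depends only on `α` and `m`, equals `m` at `α = 0`, is strictly decreasing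
in `α` (for `m ≥ 2`), and tends to `1` as `α → ∞`. -/
theorem rankMe_power_law {N K : ℕ} (Z : Matrix (Fin N) (Fin K) ℝ) (α Cc : ℝ)
    (hα : 0 ≤ α) (hC : 0 < Cc) (hK : 0 < K)
    (hσ : ∀ k : Fin K, singularValues Z k = Cc * (((k : ℕ) + 1 : ℝ) ^ (-α))) :
    rankMe Z = powerLawRankMe K α ∧
    powerLawRankMe K 0 = (K : ℝ) ∧
    (2 ≤ K → StrictAntiOn (powerLawRankMe K) (Set.Ici (0 : ℝ))) ∧
    Filter.Tendsto (powerLawRankMe K) Filter.atTop (nhds 1) :=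
  rankMe_power_law_general Z α Cc hC hK hσ
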